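/- Bound on the incremental operator error (Lemma 1). Let n, b ≥ 1 and γ > 0. Let g_1,…,g_b : ℝ^n → ℝ be convex and Lipschitz continuous with constants L_1,…,L_b; set L := max{L_1,…,L_b} and g := (1/b)·Σ_{i=1}^b g_i. Let D : ℝ^n → ℝ^n be any map, and define S(v) := D(v) − prox_{γg}(2·D(v) − v) and, for each i ∈ {1,…,b}, S_i(v) := D(v) − prox_{γ g_i}(2·D(v) − v). Then for every i ∈ {1,…,b} and every v ∈ ℝ^n, ‖S_i(v) − S(v)‖ ≤ 2γL; consequently, if i is a random index uniformly distributed on {1,…,b}, then E[‖S_i(v) − S(v)‖²] ≤ 4γ²L². -/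

import Mathlib

open MeasureTheory
open scoped RealInnerProductSpace

/-- Euclidean space ℝ^n. -/
abbrev En (n : ℕ) := EuclideanSpace ℝ (Fin n)

/-- `G` is the proximal operator `prox_{γf}`: for every `z`, `G z` minimizes
`x ↦ (1/2)‖x − z‖² + γ f x` over `ℝ^n`. -/
def IsProx {n : ℕ} (γ : ℝ) (f : En n → ℝ) (G : En n → En n) : Prop :=
  ∀ z x : En n,
    (1 / 2 : ℝ) * ‖G z - z‖ ^ 2 + γ * f (G z) ≤ (1 / 2 : ℝ) * ‖x - z‖ ^ 2 + γ * f x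

/-!
The proximal point `p` of a convex `f` at `z` satisfies the variational inequality
`⟪z - p, x - p⟫ ≤ γ (f x - f p)` for all `x` (compare the objective at `p` and at
`p + t (x - p)`, use convexity and let `t → 0⁺`). Adding these inequalities for the proximal
points `p` of `f` and `q` of `h` at the same `z` gives `‖p - q‖² ≤ γ ((f - h) q - (f - h) p)`,
so `‖p - q‖ ≤ γ M` as soon as `f - h` is `M`-Lipschitz. Here `S_i v - S v` is the difference of
the proximal points of `g` and `g_i` at `2 D v - v`, and `g - g_i` is `2L`-Lipschitz; the
expectation bound is the square of the pointwise one.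
-/

open Filter Topology

theorem convexOn_sum {ι E : Type*} [AddCommGroup E] [Module ℝ E] {s : Set E} (hs : Convex ℝ s)
    {t : Finset ι} {f : ι → E → ℝ} (hf : ∀ i ∈ t, ConvexOn ℝ s (f i)) :
    ConvexOn ℝ s fun x => ∑ i ∈ t, f i x := by
  refine ⟨hs, fun x hx y hy a b ha hb hab => ?_⟩
  simp only [smul_eq_mul, Finset.mul_sum, ← Finset.sum_add_distrib]
  exact Finset.sum_le_sum fun i hi => (hf i hi).2 hx hy ha hb hab

theorem average_sub_average_le {ι : Type*} [Fintype ι] [Nonempty ι] {u w : ι → ℝ} {K : ℝ}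
    (h : ∀ i, u i - w i ≤ K) :
    1 / (Fintype.card ι : ℝ) * ∑ i, u i - 1 / (Fintype.card ι : ℝ) * ∑ i, w i ≤ K := by
  have hcard : (0 : ℝ) < Fintype.card ι := by exact_mod_cast Fintype.card_pos
  rw [← mul_sub, ← Finset.sum_sub_distrib, one_div_mul_eq_div, div_le_iff₀ hcard, mul_comm]
  simpa using Finset.sum_le_card_nsmul Finset.univ _ K fun i _ => h i

theorem nonneg_of_abs_sub_le_mul_norm {E : Type*} [NormedAddCommGroup E] [Nontrivial E]
    {φ : E → ℝ} {K : ℝ} (h : ∀ x y, |φ x - φ y| ≤ K * ‖x - y‖) : 0 ≤ K := by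
  obtain ⟨x, hx⟩ := exists_ne (0 : E)
  refine nonneg_of_mul_nonneg_left ((abs_nonneg _).trans (h x 0)) ?_
  simpa using hx

section Prox

variable {E : Type*} [NormedAddCommGroup E] [InnerProductSpace ℝ E] {γ : ℝ} {f h : E → ℝ}
  {z p q : E}

theorem inner_sub_le_of_forall_prox_le (hγ : 0 ≤ γ) (hf : ConvexOn ℝ Set.univ f)
    (hp : ∀ x, 1 / 2 * ‖p - z‖ ^ 2 + γ * f p ≤ 1 / 2 * ‖x - z‖ ^ 2 + γ * f x) (x : E) :
    ⟪z - p, x - p⟫ ≤ γ * (f x - f p) := by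
  have step : ∀ t ∈ Set.Ioo (0 : ℝ) 1,
      ⟪z - p, x - p⟫ ≤ γ * (f x - f p) + t * (‖x - p‖ ^ 2 / 2) := by
    rintro t ⟨ht0, ht1⟩
    have hmin := hp (p + t • (x - p))
    have hconv : f (p + t • (x - p)) ≤ (1 - t) * f p + t * f x := by
      have := hf.2 (Set.mem_univ p) (Set.mem_univ x) (sub_nonneg.2 ht1.le) ht0.le (by ring)
      rwa [show (1 - t) • p + t • x = p + t • (x - p) by module] at this
    rw [show p + t • (x - p) - z = (p - z) + t • (x - p) by abel, norm_add_sq_real,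
      inner_smul_right, norm_smul, Real.norm_eq_abs, mul_pow, sq_abs] at hmin
    have hscaled : t * ⟪z - p, x - p⟫ ≤ t * (γ * (f x - f p) + t * (‖x - p‖ ^ 2 / 2)) := by
      rw [← neg_sub p z, inner_neg_left]
      nlinarith [mul_le_mul_of_nonneg_left hconv hγ]
    exact le_of_mul_le_mul_left hscaled ht0
  have hlim : Tendsto (fun t : ℝ => γ * (f x - f p) + t * (‖x - p‖ ^ 2 / 2)) (𝓝[>] 0)
      (𝓝 (γ * (f x - f p))) := by
    have : Continuous fun t : ℝ => γ * (f x - f p) + t * (‖x - p‖ ^ 2 / 2) := by fun_prop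
    simpa using (this.tendsto 0).mono_left nhdsWithin_le_nhds
  exact ge_of_tendsto hlim (mem_of_superset (Ioo_mem_nhdsGT one_pos) step)

theorem norm_sub_le_of_forall_prox_le (hγ : 0 ≤ γ) (hf : ConvexOn ℝ Set.univ f)
    (hh : ConvexOn ℝ Set.univ h)
    (hp : ∀ x, 1 / 2 * ‖p - z‖ ^ 2 + γ * f p ≤ 1 / 2 * ‖x - z‖ ^ 2 + γ * f x)
    (hq : ∀ x, 1 / 2 * ‖q - z‖ ^ 2 + γ * h q ≤ 1 / 2 * ‖x - z‖ ^ 2 + γ * h x)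
    {M : ℝ} (hM0 : 0 ≤ M) (hM : ∀ x y, (f x - h x) - (f y - h y) ≤ M * ‖x - y‖) :
    ‖p - q‖ ≤ γ * M := by
  have hfp := inner_sub_le_of_forall_prox_le hγ hf hp q
  have hhq := inner_sub_le_of_forall_prox_le hγ hh hq p
  have hsq : ‖p - q‖ ^ 2 = ⟪z - p, q - p⟫ + ⟪z - q, p - q⟫ := by
    simp only [norm_sub_sq_real, inner_sub_left, inner_sub_right, real_inner_self_eq_norm_sq,
      real_inner_comm]
    ring
  have hlip := mul_le_mul_of_nonneg_left (hM q p) hγ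
  rw [norm_sub_rev q p] at hlip
  nlinarith [norm_nonneg (p - q), mul_nonneg hγ hM0]

end Prox

theorem incremental_operator_error_bound_general {n b : ℕ} (hn : 1 ≤ n)
    (γ : ℝ) (hγ : 0 < γ)
    (g : Fin b → En n → ℝ)
    (hconv : ∀ i, ConvexOn ℝ Set.univ (g i))
    (Lc : Fin b → ℝ)
    (hlip : ∀ i, ∀ x y : En n, |g i x - g i y| ≤ Lc i * ‖x - y‖)
    (L : ℝ) (hL : L = ⨆ i, Lc i)
    (D : En n → En n)
    (G : En n → En n) (hG : IsProx γ (fun x => (1 / (b : ℝ)) * ∑ i, g i x) G)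
    (Gi : Fin b → En n → En n) (hGi : ∀ i, IsProx γ (g i) (Gi i))
    (S : En n → En n) (hS : ∀ v : En n, S v = D v - G ((2 : ℝ) • D v - v))
    (Si : Fin b → En n → En n)
    (hSi : ∀ i, ∀ v : En n, Si i v = D v - Gi i ((2 : ℝ) • D v - v))
    (Ω : Type*) [MeasurableSpace Ω] (μ : Measure Ω) [IsProbabilityMeasure μ]
    (I : Ω → Fin b)
    (v : En n) :
    (∀ (i : Fin b) (w : En n), ‖Si i w - S w‖ ≤ 2 * γ * L) ∧
      ∫ ω, ‖Si (I ω) v - S v‖ ^ 2 ∂μ ≤ 4 * γ ^ 2 * L ^ 2 := by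
  have : Nonempty (Fin n) := ⟨⟨0, hn⟩⟩
  have hLc_le : ∀ i, Lc i ≤ L := hL ▸ le_ciSup (Set.finite_range Lc).bddAbove
  have hgL : ∀ i x y, |g i x - g i y| ≤ L * ‖x - y‖ := fun i x y =>
    (hlip i x y).trans (mul_le_mul_of_nonneg_right (hLc_le i) (norm_nonneg _))
  have bound : ∀ i w, ‖Si i w - S w‖ ≤ 2 * γ * L := by
    intro i w
    have : Nonempty (Fin b) := ⟨i⟩
    have hL0 : 0 ≤ L := (nonneg_of_abs_sub_le_mul_norm (hlip i)).trans (hLc_le i)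
    have hM : ∀ x y, ((1 / (b : ℝ)) * ∑ j, g j x - g i x) - ((1 / (b : ℝ)) * ∑ j, g j y - g i y)
        ≤ 2 * L * ‖x - y‖ := by
      intro x y
      have havg := average_sub_average_le fun j => (abs_le.1 (hgL j x y)).2
      rw [Fintype.card_fin] at havg
      linarith [(abs_le.1 (hgL i x y)).1]
    rw [hSi, hS, sub_sub_sub_cancel_left, mul_comm 2 γ, mul_assoc]
    exact norm_sub_le_of_forall_prox_le hγ.le
      ((convexOn_sum convex_univ fun j _ => hconv j).smul (by positivity)) (hconv i)
      (hG _) (hGi i _) (by positivity) hM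
  refine ⟨bound, ?_⟩
  calc ∫ ω, ‖Si (I ω) v - S v‖ ^ 2 ∂μ ≤ ∫ _, (2 * γ * L) ^ 2 ∂μ :=
        integral_mono_of_nonneg (ae_of_all _ fun _ => sq_nonneg _) (integrable_const _)
          (ae_of_all _ fun ω => pow_le_pow_left₀ (norm_nonneg _) (bound (I ω) v) 2)
    _ = 4 * γ ^ 2 * L ^ 2 := by rw [integral_const, probReal_univ, smul_eq_mul]; ring

/-- Bound on the incremental operator error (Lemma 1): a deterministic bound
`‖S_i(v) − S(v)‖ ≤ 2γL` for every index `i`, and consequently the expectation bound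
`E[‖S_I(v) − S(v)‖²] ≤ 4γ²L²` for a uniformly distributed random index `I`. -/
theorem incremental_operator_error_bound {n b : ℕ} (hn : 1 ≤ n) (hb : 1 ≤ b)
    (γ : ℝ) (hγ : 0 < γ)
    (g : Fin b → En n → ℝ)
    (hconv : ∀ i, ConvexOn ℝ Set.univ (g i))
    (Lc : Fin b → ℝ)
    (hlip : ∀ i, ∀ x y : En n, |g i x - g i y| ≤ Lc i * ‖x - y‖)
    (L : ℝ) (hL : L = ⨆ i, Lc i)
    (D : En n → En n)
    (G : En n → En n) (hG : IsProx γ (fun x => (1 / (b : ℝ)) * ∑ i, g i x) G)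
    (Gi : Fin b → En n → En n) (hGi : ∀ i, IsProx γ (g i) (Gi i))
    (S : En n → En n) (hS : ∀ v : En n, S v = D v - G ((2 : ℝ) • D v - v))
    (Si : Fin b → En n → En n)
    (hSi : ∀ i, ∀ v : En n, Si i v = D v - Gi i ((2 : ℝ) • D v - v))
    (Ω : Type*) [MeasurableSpace Ω] (μ : Measure Ω) [IsProbabilityMeasure μ]
    (I : Ω → Fin b) (hImeas : Measurable I)
    (hIunif : ∀ i : Fin b, μ {ω | I ω = i} = 1 / (b : ENNReal))
    (v : En n) :
    (∀ (i : Fin b) (w : En n), ‖Si i w - S w‖ ≤ 2 * γ * L) ∧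
      ∫ ω, ‖Si (I ω) v - S v‖ ^ 2 ∂μ ≤ 4 * γ ^ 2 * L ^ 2 :=
  incremental_operator_error_bound_general hn γ hγ g hconv Lc hlip L hL D G hG Gi hGi S hS Si hSi Ω
    μ I v
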